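/- If a sequence of functions fₙ : E → 𝕋 (E ⊂ 𝕋) converges bispherically uniformly on E to a bounded function f : E → 𝕋, then fₙ converges uniformly to f on E in the Euclidean norm. -/

import Mathlib

/-- The bicomplex numbers `𝕋`, represented as pairs `(z₁, z₂)` meaning `z₁ + z₂ i₂`. -/
abbrev Bicomplex := ℂ × ℂ

/-- The projection `P₁(z₁ + z₂ i₂) = z₁ - z₂ i₁`. -/
def P1 (w : Bicomplex) : ℂ := w.1 - w.2 * Complex.I

/-- The projection `P₂(z₁ + z₂ i₂) = z₁ + z₂ i₁`. -/
def P2 (w : Bicomplex) : ℂ := w.1 + w.2 * Complex.I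

/-- The Euclidean norm on `𝕋 ≅ ℝ⁴`: `‖z₁ + z₂ i₂‖² = |z₁|² + |z₂|²`. -/
noncomputable def Bnorm (w : Bicomplex) : ℝ := Real.sqrt (‖w.1‖ ^ 2 + ‖w.2‖ ^ 2)

/-- The chordal metric on `ℂ`: `χ(a,b) = |a-b| / (sqrt(1+|a|²) sqrt(1+|b|²))`. -/
noncomputable def chord (a b : ℂ) : ℝ :=
  ‖a - b‖ / (Real.sqrt (1 + ‖a‖ ^ 2) * Real.sqrt (1 + ‖b‖ ^ 2))

/-- The bicomplex chordal metric (restricted to `𝕋`):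
`χₑ(z,w) = sqrt((χ(P₁z, P₁w)² + χ(P₂z, P₂w)²)/2)`. -/
noncomputable def chiE (z w : Bicomplex) : ℝ :=
  Real.sqrt ((chord (P1 z) (P1 w) ^ 2 + chord (P2 z) (P2 w) ^ 2) / 2)


/-!
`Bnorm` is the Euclidean norm of `ℂ × ℂ`, and the idempotent decomposition satisfies
`‖P₁z‖² + ‖P₂z‖² = 2‖z‖²`. Applying `|a - b| = χ(a,b) √(1+|a|²) √(1+|b|²)` to both projections
gives `‖z - w‖ ≤ χₑ(z,w) √(1+2‖z‖²) √(1+2‖w‖²)`. With `‖w‖ ≤ M`, `K = 1 + 2M` and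
`x = ‖z - w‖` this reads `x ≤ χₑ K (K + 2x)`, so once `4 χₑ K ≤ 1` the term in `x` is absorbed
and `x ≤ 2 K² χₑ`, uniformly in the points.
-/

open Real

lemma Bnorm_eq_norm_toLp (w : Bicomplex) : Bnorm w = ‖WithLp.toLp 2 w‖ :=
  (WithLp.prod_norm_eq_of_L2 _).symm

lemma Bnorm_nonneg (w : Bicomplex) : 0 ≤ Bnorm w := sqrt_nonneg _

lemma Bnorm_add_le (z w : Bicomplex) : Bnorm (z + w) ≤ Bnorm z + Bnorm w := by
  simpa only [Bnorm_eq_norm_toLp, WithLp.toLp_add] using norm_add_le _ _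

lemma norm_P1_sq_add_norm_P2_sq (z : Bicomplex) :
    ‖P1 z‖ ^ 2 + ‖P2 z‖ ^ 2 = 2 * Bnorm z ^ 2 := by
  rw [Bnorm, sq_sqrt (by positivity)]
  simp only [P1, P2, Complex.sq_norm, Complex.normSq_apply, Complex.sub_re, Complex.sub_im,
    Complex.add_re, Complex.add_im, Complex.mul_re, Complex.mul_im, Complex.I_re, Complex.I_im]
  ring

lemma P1_sub (z w : Bicomplex) : P1 (z - w) = P1 z - P1 w := by
  simp only [P1, Prod.fst_sub, Prod.snd_sub]; ring

lemma P2_sub (z w : Bicomplex) : P2 (z - w) = P2 z - P2 w := by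
  simp only [P2, Prod.fst_sub, Prod.snd_sub]; ring

lemma norm_sub_le_chord_mul {a b : ℂ} {A B : ℝ} (hA : √(1 + ‖a‖ ^ 2) ≤ A)
    (hB : √(1 + ‖b‖ ^ 2) ≤ B) : ‖a - b‖ ≤ chord a b * (A * B) := by
  have hpos : 0 < √(1 + ‖a‖ ^ 2) * √(1 + ‖b‖ ^ 2) := by positivity
  calc ‖a - b‖ = chord a b * (√(1 + ‖a‖ ^ 2) * √(1 + ‖b‖ ^ 2)) :=
        (div_mul_cancel₀ _ hpos.ne').symm
    _ ≤ chord a b * (A * B) := by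
        have hA₀ : 0 ≤ A := (sqrt_nonneg _).trans hA
        gcongr
        exact div_nonneg (norm_nonneg _) hpos.le

lemma Bnorm_sub_le_chiE_mul (z w : Bicomplex) :
    Bnorm (z - w) ≤ chiE z w * (√(1 + 2 * Bnorm z ^ 2) * √(1 + 2 * Bnorm w ^ 2)) := by
  set c := √(1 + 2 * Bnorm z ^ 2) * √(1 + 2 * Bnorm w ^ 2)
  have hP (z : Bicomplex) := norm_P1_sq_add_norm_P2_sq z
  have h₁ : ‖P1 z - P1 w‖ ≤ chord (P1 z) (P1 w) * c :=
    norm_sub_le_chord_mul (by gcongr; nlinarith [hP z]) (by gcongr; nlinarith [hP w])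
  have h₂ : ‖P2 z - P2 w‖ ≤ chord (P2 z) (P2 w) * c :=
    norm_sub_le_chord_mul (by gcongr; nlinarith [hP z]) (by gcongr; nlinarith [hP w])
  have hBnorm : Bnorm (z - w) = √((‖P1 z - P1 w‖ ^ 2 + ‖P2 z - P2 w‖ ^ 2) / 2) := by
    rw [← P1_sub, ← P2_sub, norm_P1_sq_add_norm_P2_sq, mul_div_cancel_left₀ _ two_ne_zero,
      sqrt_sq (Bnorm_nonneg _)]
  calc Bnorm (z - w)
      ≤ √(((chord (P1 z) (P1 w) * c) ^ 2 + (chord (P2 z) (P2 w) * c) ^ 2) / 2) := by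
        rw [hBnorm]; gcongr
    _ = √((chord (P1 z) (P1 w) ^ 2 + chord (P2 z) (P2 w) ^ 2) / 2 * c ^ 2) := by
        congr 1; ring
    _ = chiE z w * c := by
        rw [sqrt_mul' _ (sq_nonneg c), sqrt_sq (by positivity), chiE]

lemma sqrt_one_add_two_mul_sq_le {t : ℝ} (ht : 0 ≤ t) : √(1 + 2 * t ^ 2) ≤ 1 + 2 * t :=
  (sqrt_le_left (by positivity)).2 (by nlinarith)

lemma Bnorm_sub_le_of_chiE_le {z w : Bicomplex} {M : ℝ} (hw : Bnorm w ≤ M)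
    (hχ : 4 * chiE z w * (1 + 2 * M) ≤ 1) :
    Bnorm (z - w) ≤ 2 * (1 + 2 * M) ^ 2 * chiE z w := by
  set x := Bnorm (z - w)
  have hx : 0 ≤ x := Bnorm_nonneg _
  have hK : 0 ≤ 1 + 2 * M := by linarith [Bnorm_nonneg w]
  have hz : Bnorm z ≤ x + M := by
    simpa only [sub_add_cancel] using (Bnorm_add_le (z - w) w).trans (add_le_add_right hw x)
  have hsz : √(1 + 2 * Bnorm z ^ 2) ≤ 1 + 2 * M + 2 * x :=
    (sqrt_one_add_two_mul_sq_le (Bnorm_nonneg z)).trans (by linarith)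
  have hsw : √(1 + 2 * Bnorm w ^ 2) ≤ 1 + 2 * M :=
    (sqrt_one_add_two_mul_sq_le (Bnorm_nonneg w)).trans (by linarith)
  have hc : 0 ≤ chiE z w := sqrt_nonneg _
  have key : x ≤ chiE z w * ((1 + 2 * M + 2 * x) * (1 + 2 * M)) :=
    (Bnorm_sub_le_chiE_mul z w).trans (by gcongr)
  nlinarith [mul_nonneg hx (sub_nonneg.2 hχ)]

/-- If a sequence of functions `fₙ : E → 𝕋` converges bispherically uniformly (i.e.
uniformly in the bicomplex chordal metric `χₑ`) on `E ⊆ 𝕋` to a bounded function `f`,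
then `fₙ` converges uniformly to `f` on `E` in the Euclidean norm. -/
theorem unif_bispherical_to_unif_euclidean (E : Set Bicomplex)
    (f : Bicomplex → Bicomplex) (fn : ℕ → Bicomplex → Bicomplex)
    (hbdd : ∃ M : ℝ, ∀ w ∈ E, Bnorm (f w) ≤ M)
    (hconv : ∀ ε > (0 : ℝ), ∃ N : ℕ, ∀ n ≥ N, ∀ w ∈ E, chiE (fn n w) (f w) < ε) :
    ∀ ε > (0 : ℝ), ∃ N : ℕ, ∀ n ≥ N, ∀ w ∈ E, Bnorm (fn n w - f w) < ε := by
  intro ε hε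
  obtain ⟨M, hM⟩ := hbdd
  set K := 1 + 2 * max M 0
  have hK : 0 < K := by positivity
  obtain ⟨N, hN⟩ := hconv (min (1 / (4 * K)) (ε / (2 * K ^ 2))) (by positivity)
  refine ⟨N, fun n hn w hw => ?_⟩
  have hχ := hN n hn w hw
  have hχK : 4 * chiE (fn n w) (f w) * K ≤ 1 := by
    have h := hχ.trans_le (min_le_left _ _)
    rw [lt_div_iff₀ (by positivity)] at h
    linarith
  have hχε : 2 * K ^ 2 * chiE (fn n w) (f w) < ε := by
    have h := hχ.trans_le (min_le_right _ _)
    rw [lt_div_iff₀ (by positivity)] at h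
    linarith
  exact (Bnorm_sub_le_of_chiE_le ((hM w hw).trans (le_max_left M 0)) hχK).trans_lt hχε
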